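/- Let s and s' be ℤ-linear automorphisms of Pic which preserve the intersection form, fix K, and map the set {D0, D1, …, D12} bijectively onto itself. If s(αi) = s'(αi) for i = 1, 2, 3, then s = s' (they agree on all of Pic). -/
import Mathlib




/-- The Picard lattice of the space of initial values of the HV equation:
the free ℤ-module of rank 16 with basis `H0, H1, E1, …, E14`. -/
abbrev Pic : Type := Fin 16 → ℤ

/-- The class `H0` (total transform of a line `x = const`). -/
def H0 : Pic := Pi.single 0 1

/-- The class `H1` (total transform of a line `y = const`). -/
def H1 : Pic := Pi.single 1 1

/-- The exceptional classes: `E k` is the paper's `E_{k+1}` for `k : Fin 14`. -/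
def E (k : Fin 14) : Pic := Pi.single k.succ.succ 1

/-- The intersection form: `H0·H1 = 1`, `H0·H0 = H1·H1 = 0`, `Ek·El = -δ`, `Hi·Ek = 0`. -/
def ip (u v : Pic) : ℤ :=
  u 0 * v 1 + u 1 * v 0 - ∑ k : Fin 14, u k.succ.succ * v k.succ.succ

/-- The canonical class `K = -2H0 - 2H1 + E1 + ⋯ + E14`. -/
def KX : Pic := (-2 : ℤ) • H0 + (-2 : ℤ) • H1 + ∑ k : Fin 14, E k

/-- The classes `D0, …, D12` of the irreducible components of `-K`. -/
def D : Fin 13 → Pic :=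
  ![E 0 - E 1, E 1 - E 2, E 2 - E 3,
    E 4 - E 5, E 5 - E 6, E 6 - E 7,
    E 8 - E 9, E 10 - E 11, E 11 - E 12, E 12 - E 13,
    H0 - E 0 - E 1 - E 8, H1 - E 4 - E 5 - E 8, E 9 - E 10 - E 11]

/-- The root basis `α1, α2, α3` of the orthogonal complement of the `D`'s. -/
def α : Fin 3 → Pic :=
  ![(2 : ℤ) • H1 - E 0 - E 1 - E 2 - E 3,
    (2 : ℤ) • H0 - E 4 - E 5 - E 6 - E 7,
    (2 : ℤ) • H0 + (2 : ℤ) • H1 - (2 : ℤ) • E 8 - (2 : ℤ) • E 9 - E 10 - E 11 - E 12 - E 13]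

/-- The ℤ-linear map sending the `j`-th basis vector to `f j`. -/
def ofImages (f : Fin 16 → Pic) : Pic →ₗ[ℤ] Pic :=
  Matrix.toLin' (Matrix.of fun i j => f j i)

/-- The generator `w1`. -/
def w1 : Pic →ₗ[ℤ] Pic := ofImages
  ![H0 + (2 : ℤ) • H1 - E 0 - E 1 - E 2 - E 3, H1,
    H1 - E 3, H1 - E 2, H1 - E 1, H1 - E 0,
    E 4, E 5, E 6, E 7, E 8, E 9, E 10, E 11, E 12, E 13]

/-- The generator `w2`. -/
def w2 : Pic →ₗ[ℤ] Pic := ofImages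
  ![H0, (2 : ℤ) • H0 + H1 - E 4 - E 5 - E 6 - E 7,
    E 0, E 1, E 2, E 3,
    H0 - E 7, H0 - E 6, H0 - E 5, H0 - E 4,
    E 8, E 9, E 10, E 11, E 12, E 13]

/-- The generator `w3`. -/
def w3 : Pic →ₗ[ℤ] Pic := ofImages
  ![H0 + α 2, H1 + α 2,
    E 0, E 1, E 2, E 3, E 4, E 5, E 6, E 7,
    E 8 + α 2, E 9 + α 2,
    E 10 + (H0 + H1 - E 8 - E 9 - E 10 - E 13),
    E 11 + (H0 + H1 - E 8 - E 9 - E 11 - E 12),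
    E 12 + (H0 + H1 - E 8 - E 9 - E 11 - E 12),
    E 13 + (H0 + H1 - E 8 - E 9 - E 10 - E 13)]

/-- The generator `σ12`. -/
def s12 : Pic →ₗ[ℤ] Pic := ofImages
  ![H1, H0, E 4, E 5, E 6, E 7, E 0, E 1, E 2, E 3,
    E 8, E 9, E 10, E 11, E 12, E 13]

/-- The generator `σ13`. -/
def s13 : Pic →ₗ[ℤ] Pic := ofImages
  ![H0, H0 + H1 - E 8 - E 9,
    E 10, E 11, E 12, E 13,
    E 4, E 5, E 6, E 7,
    H0 - E 9, H0 - E 8,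
    E 0, E 1, E 2, E 3]

/-- The action `φ` of the Hietarinta–Viallet equation on the Picard lattice. -/
def phiHV : Pic →ₗ[ℤ] Pic := ofImages
  ![(3 : ℤ) • H0 + H1 - E 4 - E 5 - E 6 - E 7 - E 8 - E 9, H0,
    H0 - E 7, H0 - E 6, H0 - E 5, H0 - E 4,
    E 10, E 11, E 12, E 13,
    H0 - E 9, H0 - E 8,
    E 0, E 1, E 2, E 3]


private def tmap (s s' : Pic ≃ₗ[ℤ] Pic) : Pic →ₗ[ℤ] Pic :=
  s'.symm.toLinearMap.comp s.toLinearMap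

private lemma tmap_apply (s s' : Pic ≃ₗ[ℤ] Pic) (x : Pic) :
    tmap s s' x = s'.symm (s x) := rfl

private lemma lemP1 : (2 : ℤ) • ((Pi.single 1 1 : Pic) - Pi.single 3 1 - Pi.single 5 1) = α 0 + D 0 + D 2 := by decide

private lemma lemP2 : (2 : ℤ) • ((Pi.single 0 1 : Pic) - Pi.single 7 1 - Pi.single 9 1) = α 1 + D 3 + D 5 := by decide

private lemma lemP3 : (2 : ℤ) • ((Pi.single 0 1 : Pic) + Pi.single 1 1 - Pi.single 10 1 - Pi.single 11 1 - Pi.single 13 1 - Pi.single 15 1) = α 2 + D 7 + D 9 := by decide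

private lemma lemL1 : ∀ k l : Fin 13, (∀ m : Fin 16, (α 0 + D k + D l) m % 2 = 0) → (k = 0 ∧ l = 2) ∨ (k = 2 ∧ l = 0) := by decide

private lemma lemL2 : ∀ k l : Fin 13, (∀ m : Fin 16, (α 1 + D k + D l) m % 2 = 0) → (k = 3 ∧ l = 5) ∨ (k = 5 ∧ l = 3) := by decide

private lemma lemL3 : ∀ k l : Fin 13, (∀ m : Fin 16, (α 2 + D k + D l) m % 2 = 0) → (k = 7 ∧ l = 9) ∨ (k = 9 ∧ l = 7) := by decide

private lemma lemL4 : ∀ k : Fin 13, ip (D k) (D 0) = 1 → ip (D k) (D 2) = 1 → k = 1 := by decide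

private lemma lemL5 : ∀ k : Fin 13, ip (D k) (D 3) = 1 → ip (D k) (D 5) = 1 → k = 4 := by decide

private lemma lemL6 : ∀ k : Fin 13, ip (D k) (D 7) = 1 → ip (D k) (D 9) = 1 → k = 8 := by decide

private lemma lemL7 : ∀ k : Fin 13, ip (D k) (D k) = -3 → ip (D k) (D 1) = 1 → k = 10 := by decide

private lemma lemL8 : ∀ k : Fin 13, ip (D k) (D k) = -3 → ip (D k) (D 4) = 1 → k = 11 := by decide

private lemma lemL9 : ∀ k : Fin 13, ip (D k) (D k) = -3 → ip (D k) (D 8) = 1 → k = 12 := by decide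

private lemma lemL10 : ∀ k : Fin 13, ip (D k) (D 10) = 1 → ip (D k) (D 11) = 1 → k = 6 := by decide

private lemma lemJ0 : (8 : ℤ) • (Pi.single (0 : Fin 16) (1 : ℤ) : Pic) = (-2 : ℤ) • D 0 + (-4 : ℤ) • D 1 + (-2 : ℤ) • D 2 + (-4 : ℤ) • D 3 + (-8 : ℤ) • D 4 + (-4 : ℤ) • D 5 + (-8 : ℤ) • D 6 + (-2 : ℤ) • D 7 + (-4 : ℤ) • D 8 + (-2 : ℤ) • D 9 + (-4 : ℤ) • D 10 + (-8 : ℤ) • D 11 + (-4 : ℤ) • D 12 + (2 : ℤ) • α 0 + (4 : ℤ) • α 1 + (2 : ℤ) • α 2 := by decide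

private lemma lemJ1 : (8 : ℤ) • (Pi.single (1 : Fin 16) (1 : ℤ) : Pic) = (-4 : ℤ) • D 0 + (-8 : ℤ) • D 1 + (-4 : ℤ) • D 2 + (-2 : ℤ) • D 3 + (-4 : ℤ) • D 4 + (-2 : ℤ) • D 5 + (-8 : ℤ) • D 6 + (-2 : ℤ) • D 7 + (-4 : ℤ) • D 8 + (-2 : ℤ) • D 9 + (-8 : ℤ) • D 10 + (-4 : ℤ) • D 11 + (-4 : ℤ) • D 12 + (4 : ℤ) • α 0 + (2 : ℤ) • α 1 + (2 : ℤ) • α 2 := by decide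

private lemma lemJ2 : (8 : ℤ) • (Pi.single (2 : Fin 16) (1 : ℤ) : Pic) = (4 : ℤ) • D 0 + (0 : ℤ) • D 1 + (0 : ℤ) • D 2 + (-1 : ℤ) • D 3 + (-2 : ℤ) • D 4 + (-1 : ℤ) • D 5 + (-4 : ℤ) • D 6 + (-1 : ℤ) • D 7 + (-2 : ℤ) • D 8 + (-1 : ℤ) • D 9 + (-4 : ℤ) • D 10 + (-2 : ℤ) • D 11 + (-2 : ℤ) • D 12 + (0 : ℤ) • α 0 + (1 : ℤ) • α 1 + (1 : ℤ) • α 2 := by decide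

private lemma lemJ3 : (8 : ℤ) • (Pi.single (3 : Fin 16) (1 : ℤ) : Pic) = (-4 : ℤ) • D 0 + (0 : ℤ) • D 1 + (0 : ℤ) • D 2 + (-1 : ℤ) • D 3 + (-2 : ℤ) • D 4 + (-1 : ℤ) • D 5 + (-4 : ℤ) • D 6 + (-1 : ℤ) • D 7 + (-2 : ℤ) • D 8 + (-1 : ℤ) • D 9 + (-4 : ℤ) • D 10 + (-2 : ℤ) • D 11 + (-2 : ℤ) • D 12 + (0 : ℤ) • α 0 + (1 : ℤ) • α 1 + (1 : ℤ) • α 2 := by decide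

private lemma lemJ4 : (8 : ℤ) • (Pi.single (4 : Fin 16) (1 : ℤ) : Pic) = (-4 : ℤ) • D 0 + (-8 : ℤ) • D 1 + (0 : ℤ) • D 2 + (-1 : ℤ) • D 3 + (-2 : ℤ) • D 4 + (-1 : ℤ) • D 5 + (-4 : ℤ) • D 6 + (-1 : ℤ) • D 7 + (-2 : ℤ) • D 8 + (-1 : ℤ) • D 9 + (-4 : ℤ) • D 10 + (-2 : ℤ) • D 11 + (-2 : ℤ) • D 12 + (0 : ℤ) • α 0 + (1 : ℤ) • α 1 + (1 : ℤ) • α 2 := by decide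

private lemma lemJ5 : (8 : ℤ) • (Pi.single (5 : Fin 16) (1 : ℤ) : Pic) = (-4 : ℤ) • D 0 + (-8 : ℤ) • D 1 + (-8 : ℤ) • D 2 + (-1 : ℤ) • D 3 + (-2 : ℤ) • D 4 + (-1 : ℤ) • D 5 + (-4 : ℤ) • D 6 + (-1 : ℤ) • D 7 + (-2 : ℤ) • D 8 + (-1 : ℤ) • D 9 + (-4 : ℤ) • D 10 + (-2 : ℤ) • D 11 + (-2 : ℤ) • D 12 + (0 : ℤ) • α 0 + (1 : ℤ) • α 1 + (1 : ℤ) • α 2 := by decide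

private lemma lemJ6 : (8 : ℤ) • (Pi.single (6 : Fin 16) (1 : ℤ) : Pic) = (-1 : ℤ) • D 0 + (-2 : ℤ) • D 1 + (-1 : ℤ) • D 2 + (4 : ℤ) • D 3 + (0 : ℤ) • D 4 + (0 : ℤ) • D 5 + (-4 : ℤ) • D 6 + (-1 : ℤ) • D 7 + (-2 : ℤ) • D 8 + (-1 : ℤ) • D 9 + (-2 : ℤ) • D 10 + (-4 : ℤ) • D 11 + (-2 : ℤ) • D 12 + (1 : ℤ) • α 0 + (0 : ℤ) • α 1 + (1 : ℤ) • α 2 := by decide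

private lemma lemJ7 : (8 : ℤ) • (Pi.single (7 : Fin 16) (1 : ℤ) : Pic) = (-1 : ℤ) • D 0 + (-2 : ℤ) • D 1 + (-1 : ℤ) • D 2 + (-4 : ℤ) • D 3 + (0 : ℤ) • D 4 + (0 : ℤ) • D 5 + (-4 : ℤ) • D 6 + (-1 : ℤ) • D 7 + (-2 : ℤ) • D 8 + (-1 : ℤ) • D 9 + (-2 : ℤ) • D 10 + (-4 : ℤ) • D 11 + (-2 : ℤ) • D 12 + (1 : ℤ) • α 0 + (0 : ℤ) • α 1 + (1 : ℤ) • α 2 := by decide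

private lemma lemJ8 : (8 : ℤ) • (Pi.single (8 : Fin 16) (1 : ℤ) : Pic) = (-1 : ℤ) • D 0 + (-2 : ℤ) • D 1 + (-1 : ℤ) • D 2 + (-4 : ℤ) • D 3 + (-8 : ℤ) • D 4 + (0 : ℤ) • D 5 + (-4 : ℤ) • D 6 + (-1 : ℤ) • D 7 + (-2 : ℤ) • D 8 + (-1 : ℤ) • D 9 + (-2 : ℤ) • D 10 + (-4 : ℤ) • D 11 + (-2 : ℤ) • D 12 + (1 : ℤ) • α 0 + (0 : ℤ) • α 1 + (1 : ℤ) • α 2 := by decide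

private lemma lemJ9 : (8 : ℤ) • (Pi.single (9 : Fin 16) (1 : ℤ) : Pic) = (-1 : ℤ) • D 0 + (-2 : ℤ) • D 1 + (-1 : ℤ) • D 2 + (-4 : ℤ) • D 3 + (-8 : ℤ) • D 4 + (-8 : ℤ) • D 5 + (-4 : ℤ) • D 6 + (-1 : ℤ) • D 7 + (-2 : ℤ) • D 8 + (-1 : ℤ) • D 9 + (-2 : ℤ) • D 10 + (-4 : ℤ) • D 11 + (-2 : ℤ) • D 12 + (1 : ℤ) • α 0 + (0 : ℤ) • α 1 + (1 : ℤ) • α 2 := by decide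

private lemma lemJ10 : (8 : ℤ) • (Pi.single (10 : Fin 16) (1 : ℤ) : Pic) = (-2 : ℤ) • D 0 + (-4 : ℤ) • D 1 + (-2 : ℤ) • D 2 + (-2 : ℤ) • D 3 + (-4 : ℤ) • D 4 + (-2 : ℤ) • D 5 + (0 : ℤ) • D 6 + (0 : ℤ) • D 7 + (0 : ℤ) • D 8 + (0 : ℤ) • D 9 + (-4 : ℤ) • D 10 + (-4 : ℤ) • D 11 + (0 : ℤ) • D 12 + (2 : ℤ) • α 0 + (2 : ℤ) • α 1 + (0 : ℤ) • α 2 := by decide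

private lemma lemJ11 : (8 : ℤ) • (Pi.single (11 : Fin 16) (1 : ℤ) : Pic) = (-2 : ℤ) • D 0 + (-4 : ℤ) • D 1 + (-2 : ℤ) • D 2 + (-2 : ℤ) • D 3 + (-4 : ℤ) • D 4 + (-2 : ℤ) • D 5 + (-8 : ℤ) • D 6 + (0 : ℤ) • D 7 + (0 : ℤ) • D 8 + (0 : ℤ) • D 9 + (-4 : ℤ) • D 10 + (-4 : ℤ) • D 11 + (0 : ℤ) • D 12 + (2 : ℤ) • α 0 + (2 : ℤ) • α 1 + (0 : ℤ) • α 2 := by decide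

private lemma lemJ12 : (8 : ℤ) • (Pi.single (12 : Fin 16) (1 : ℤ) : Pic) = (-1 : ℤ) • D 0 + (-2 : ℤ) • D 1 + (-1 : ℤ) • D 2 + (-1 : ℤ) • D 3 + (-2 : ℤ) • D 4 + (-1 : ℤ) • D 5 + (-4 : ℤ) • D 6 + (4 : ℤ) • D 7 + (0 : ℤ) • D 8 + (0 : ℤ) • D 9 + (-2 : ℤ) • D 10 + (-2 : ℤ) • D 11 + (-4 : ℤ) • D 12 + (1 : ℤ) • α 0 + (1 : ℤ) • α 1 + (0 : ℤ) • α 2 := by decide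

private lemma lemJ13 : (8 : ℤ) • (Pi.single (13 : Fin 16) (1 : ℤ) : Pic) = (-1 : ℤ) • D 0 + (-2 : ℤ) • D 1 + (-1 : ℤ) • D 2 + (-1 : ℤ) • D 3 + (-2 : ℤ) • D 4 + (-1 : ℤ) • D 5 + (-4 : ℤ) • D 6 + (-4 : ℤ) • D 7 + (0 : ℤ) • D 8 + (0 : ℤ) • D 9 + (-2 : ℤ) • D 10 + (-2 : ℤ) • D 11 + (-4 : ℤ) • D 12 + (1 : ℤ) • α 0 + (1 : ℤ) • α 1 + (0 : ℤ) • α 2 := by decide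

private lemma lemJ14 : (8 : ℤ) • (Pi.single (14 : Fin 16) (1 : ℤ) : Pic) = (-1 : ℤ) • D 0 + (-2 : ℤ) • D 1 + (-1 : ℤ) • D 2 + (-1 : ℤ) • D 3 + (-2 : ℤ) • D 4 + (-1 : ℤ) • D 5 + (-4 : ℤ) • D 6 + (-4 : ℤ) • D 7 + (-8 : ℤ) • D 8 + (0 : ℤ) • D 9 + (-2 : ℤ) • D 10 + (-2 : ℤ) • D 11 + (-4 : ℤ) • D 12 + (1 : ℤ) • α 0 + (1 : ℤ) • α 1 + (0 : ℤ) • α 2 := by decide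

private lemma lemJ15 : (8 : ℤ) • (Pi.single (15 : Fin 16) (1 : ℤ) : Pic) = (-1 : ℤ) • D 0 + (-2 : ℤ) • D 1 + (-1 : ℤ) • D 2 + (-1 : ℤ) • D 3 + (-2 : ℤ) • D 4 + (-1 : ℤ) • D 5 + (-4 : ℤ) • D 6 + (-4 : ℤ) • D 7 + (-8 : ℤ) • D 8 + (-8 : ℤ) • D 9 + (-2 : ℤ) • D 10 + (-2 : ℤ) • D 11 + (-4 : ℤ) • D 12 + (1 : ℤ) • α 0 + (1 : ℤ) • α 1 + (0 : ℤ) • α 2 := by decide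

private lemma lemE0 : ((-1 : ℤ) • D 0 + (-2 : ℤ) • D 1 + (-1 : ℤ) • D 2 + (-1 : ℤ) • D 3 + (-2 : ℤ) • D 4 + (-1 : ℤ) • D 5 + (-4 : ℤ) • D 6 + (4 : ℤ) • D 9 + (0 : ℤ) • D 8 + (0 : ℤ) • D 7 + (-2 : ℤ) • D 10 + (-2 : ℤ) • D 11 + (-4 : ℤ) • D 12 + (1 : ℤ) • α 0 + (1 : ℤ) • α 1 + (0 : ℤ) • α 2) (12 : Fin 16) = 4 := by decide

private lemma lemE1 : ((-1 : ℤ) • D 0 + (-2 : ℤ) • D 1 + (-1 : ℤ) • D 2 + (4 : ℤ) • D 5 + (0 : ℤ) • D 4 + (0 : ℤ) • D 3 + (-4 : ℤ) • D 6 + (-1 : ℤ) • D 7 + (-2 : ℤ) • D 8 + (-1 : ℤ) • D 9 + (-2 : ℤ) • D 10 + (-4 : ℤ) • D 11 + (-2 : ℤ) • D 12 + (1 : ℤ) • α 0 + (0 : ℤ) • α 1 + (1 : ℤ) • α 2) (6 : Fin 16) = 4 := by decide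

private lemma lemE2 : ((-1 : ℤ) • D 0 + (-2 : ℤ) • D 1 + (-1 : ℤ) • D 2 + (4 : ℤ) • D 5 + (0 : ℤ) • D 4 + (0 : ℤ) • D 3 + (-4 : ℤ) • D 6 + (-1 : ℤ) • D 9 + (-2 : ℤ) • D 8 + (-1 : ℤ) • D 7 + (-2 : ℤ) • D 10 + (-4 : ℤ) • D 11 + (-2 : ℤ) • D 12 + (1 : ℤ) • α 0 + (0 : ℤ) • α 1 + (1 : ℤ) • α 2) (6 : Fin 16) = 4 := by decide

private lemma lemE3 : ((4 : ℤ) • D 2 + (0 : ℤ) • D 1 + (0 : ℤ) • D 0 + (-1 : ℤ) • D 3 + (-2 : ℤ) • D 4 + (-1 : ℤ) • D 5 + (-4 : ℤ) • D 6 + (-1 : ℤ) • D 7 + (-2 : ℤ) • D 8 + (-1 : ℤ) • D 9 + (-4 : ℤ) • D 10 + (-2 : ℤ) • D 11 + (-2 : ℤ) • D 12 + (0 : ℤ) • α 0 + (1 : ℤ) • α 1 + (1 : ℤ) • α 2) (2 : Fin 16) = 4 := by decide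

private lemma lemE4 : ((4 : ℤ) • D 2 + (0 : ℤ) • D 1 + (0 : ℤ) • D 0 + (-1 : ℤ) • D 3 + (-2 : ℤ) • D 4 + (-1 : ℤ) • D 5 + (-4 : ℤ) • D 6 + (-1 : ℤ) • D 9 + (-2 : ℤ) • D 8 + (-1 : ℤ) • D 7 + (-4 : ℤ) • D 10 + (-2 : ℤ) • D 11 + (-2 : ℤ) • D 12 + (0 : ℤ) • α 0 + (1 : ℤ) • α 1 + (1 : ℤ) • α 2) (2 : Fin 16) = 4 := by decide

private lemma lemE5 : ((4 : ℤ) • D 2 + (0 : ℤ) • D 1 + (0 : ℤ) • D 0 + (-1 : ℤ) • D 5 + (-2 : ℤ) • D 4 + (-1 : ℤ) • D 3 + (-4 : ℤ) • D 6 + (-1 : ℤ) • D 7 + (-2 : ℤ) • D 8 + (-1 : ℤ) • D 9 + (-4 : ℤ) • D 10 + (-2 : ℤ) • D 11 + (-2 : ℤ) • D 12 + (0 : ℤ) • α 0 + (1 : ℤ) • α 1 + (1 : ℤ) • α 2) (2 : Fin 16) = 4 := by decide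

private lemma lemE6 : ((4 : ℤ) • D 2 + (0 : ℤ) • D 1 + (0 : ℤ) • D 0 + (-1 : ℤ) • D 5 + (-2 : ℤ) • D 4 + (-1 : ℤ) • D 3 + (-4 : ℤ) • D 6 + (-1 : ℤ) • D 9 + (-2 : ℤ) • D 8 + (-1 : ℤ) • D 7 + (-4 : ℤ) • D 10 + (-2 : ℤ) • D 11 + (-2 : ℤ) • D 12 + (0 : ℤ) • α 0 + (1 : ℤ) • α 1 + (1 : ℤ) • α 2) (2 : Fin 16) = 4 := by decide

/-- Two ℤ-linear automorphisms of `Pic` that preserve the intersection form, fix `K`,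
permute the set `{D0, …, D12}`, and agree on `α1, α2, α3` are equal. -/
theorem cremona_isometry_determined_by_action_on_alpha (s s' : Pic ≃ₗ[ℤ] Pic)
    (hform : ∀ u v : Pic, ip (s u) (s v) = ip u v)
    (hform' : ∀ u v : Pic, ip (s' u) (s' v) = ip u v)
    (hK : s KX = KX) (hK' : s' KX = KX)
    (hD : Set.BijOn s (Set.range D) (Set.range D))
    (hD' : Set.BijOn s' (Set.range D) (Set.range D))
    (h : ∀ i : Fin 3, s (α i) = s' (α i)) :
    s = s' := by
  have hmem : ∀ j : Fin 13, ∃ b : Fin 13, tmap s s' (D j) = D b := by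
    intro j
    obtain ⟨x, hxr, hx⟩ := hD'.surjOn (hD.mapsTo ⟨j, rfl⟩)
    obtain ⟨b, rfl⟩ := hxr
    exact ⟨b, by rw [tmap_apply, ← hx, s'.symm_apply_apply]⟩
  have hα : ∀ i : Fin 3, tmap s s' (α i) = α i := by
    intro i; rw [tmap_apply, h i, s'.symm_apply_apply]
  have hip : ∀ u v : Pic, ip (tmap s s' u) (tmap s s' v) = ip u v := by
    intro u v
    rw [tmap_apply, tmap_apply]
    calc ip (s'.symm (s u)) (s'.symm (s v))
        = ip (s' (s'.symm (s u))) (s' (s'.symm (s v))) := (hform' _ _).symm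
      _ = ip (s u) (s v) := by rw [s'.apply_symm_apply, s'.apply_symm_apply]
      _ = ip u v := hform u v
  obtain ⟨k0, hk0⟩ := hmem 0
  obtain ⟨k1, hk1⟩ := hmem 1
  obtain ⟨k2, hk2⟩ := hmem 2
  obtain ⟨k3, hk3⟩ := hmem 3
  obtain ⟨k4, hk4⟩ := hmem 4
  obtain ⟨k5, hk5⟩ := hmem 5
  obtain ⟨k6, hk6⟩ := hmem 6
  obtain ⟨k7, hk7⟩ := hmem 7
  obtain ⟨k8, hk8⟩ := hmem 8
  obtain ⟨k9, hk9⟩ := hmem 9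
  obtain ⟨k10, hk10⟩ := hmem 10
  obtain ⟨k11, hk11⟩ := hmem 11
  obtain ⟨k12, hk12⟩ := hmem 12
  have heq1 := congrArg (tmap s s') lemP1
  simp only [map_add, map_smul, map_sub, hk0, hk2, hα] at heq1
  have hp1 : ∀ m : Fin 16, (α 0 + D k0 + D k2) m % 2 = 0 := by
    intro m
    have hcf := congrFun heq1 m
    simp only [Pi.smul_apply, Pi.add_apply, smul_eq_mul] at hcf ⊢
    omega
  have heq2 := congrArg (tmap s s') lemP2
  simp only [map_add, map_smul, map_sub, hk3, hk5, hα] at heq2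
  have hp2 : ∀ m : Fin 16, (α 1 + D k3 + D k5) m % 2 = 0 := by
    intro m
    have hcf := congrFun heq2 m
    simp only [Pi.smul_apply, Pi.add_apply, smul_eq_mul] at hcf ⊢
    omega
  have heq3 := congrArg (tmap s s') lemP3
  simp only [map_add, map_smul, map_sub, hk7, hk9, hα] at heq3
  have hp3 : ∀ m : Fin 16, (α 2 + D k7 + D k9) m % 2 = 0 := by
    intro m
    have hcf := congrFun heq3 m
    simp only [Pi.smul_apply, Pi.add_apply, smul_eq_mul] at hcf ⊢
    omega
  have hc1 := lemL1 k0 k2 hp1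
  have hc2 := lemL2 k3 k5 hp2
  have hc3 := lemL3 k7 k9 hp3
  have hA1 : ip (D k1) (D k0) = 1 := by rw [← hk1, ← hk0, hip]; decide
  have hB1 : ip (D k1) (D k2) = 1 := by rw [← hk1, ← hk2, hip]; decide
  have he1 : k1 = 1 := by
    rcases hc1 with ⟨h1, h2⟩ | ⟨h1, h2⟩
    · rw [h1] at hA1; rw [h2] at hB1; exact lemL4 k1 hA1 hB1
    · rw [h2] at hB1; rw [h1] at hA1; exact lemL4 k1 hB1 hA1
  subst he1
  have hA4 : ip (D k4) (D k3) = 1 := by rw [← hk4, ← hk3, hip]; decide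
  have hB4 : ip (D k4) (D k5) = 1 := by rw [← hk4, ← hk5, hip]; decide
  have he4 : k4 = 4 := by
    rcases hc2 with ⟨h1, h2⟩ | ⟨h1, h2⟩
    · rw [h1] at hA4; rw [h2] at hB4; exact lemL5 k4 hA4 hB4
    · rw [h2] at hB4; rw [h1] at hA4; exact lemL5 k4 hB4 hA4
  subst he4
  have hA8 : ip (D k8) (D k7) = 1 := by rw [← hk8, ← hk7, hip]; decide
  have hB8 : ip (D k8) (D k9) = 1 := by rw [← hk8, ← hk9, hip]; decide
  have he8 : k8 = 8 := by
    rcases hc3 with ⟨h1, h2⟩ | ⟨h1, h2⟩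
    · rw [h1] at hA8; rw [h2] at hB8; exact lemL6 k8 hA8 hB8
    · rw [h2] at hB8; rw [h1] at hA8; exact lemL6 k8 hB8 hA8
  subst he8
  have hA10 : ip (D k10) (D k10) = -3 := by rw [← hk10, hip]; decide
  have hB10 : ip (D k10) (D 1) = 1 := by rw [← hk10, ← hk1, hip]; decide
  have he10 : k10 = 10 := lemL7 k10 hA10 hB10
  subst he10
  have hA11 : ip (D k11) (D k11) = -3 := by rw [← hk11, hip]; decide
  have hB11 : ip (D k11) (D 4) = 1 := by rw [← hk11, ← hk4, hip]; decide
  have he11 : k11 = 11 := lemL8 k11 hA11 hB11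
  subst he11
  have hA12 : ip (D k12) (D k12) = -3 := by rw [← hk12, hip]; decide
  have hB12 : ip (D k12) (D 8) = 1 := by rw [← hk12, ← hk8, hip]; decide
  have he12 : k12 = 12 := lemL9 k12 hA12 hB12
  subst he12
  have hA6 : ip (D k6) (D 10) = 1 := by rw [← hk6, ← hk10, hip]; decide
  have hB6 : ip (D k6) (D 11) = 1 := by rw [← hk6, ← hk11, hip]; decide
  have he6 : k6 = 6 := lemL10 k6 hA6 hB6
  subst he6
  rcases hc1 with ⟨rfl, rfl⟩ | ⟨rfl, rfl⟩
  · rcases hc2 with ⟨rfl, rfl⟩ | ⟨rfl, rfl⟩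
    · rcases hc3 with ⟨rfl, rfl⟩ | ⟨rfl, rfl⟩
      · have hF0 : tmap s s' (Pi.single (0 : Fin 16) (1 : ℤ) : Pic) = Pi.single (0 : Fin 16) 1 := by
          have hJ := congrArg (tmap s s') lemJ0
          simp only [map_add, map_smul, hk0, hk1, hk2, hk3, hk4, hk5, hk6, hk7, hk8, hk9, hk10, hk11, hk12, hα] at hJ
          have h8 := hJ.trans lemJ0.symm
          funext m
          have hcf := congrFun h8 m
          simp only [Pi.smul_apply, smul_eq_mul] at hcf
          omega
        have hF1 : tmap s s' (Pi.single (1 : Fin 16) (1 : ℤ) : Pic) = Pi.single (1 : Fin 16) 1 := by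
          have hJ := congrArg (tmap s s') lemJ1
          simp only [map_add, map_smul, hk0, hk1, hk2, hk3, hk4, hk5, hk6, hk7, hk8, hk9, hk10, hk11, hk12, hα] at hJ
          have h8 := hJ.trans lemJ1.symm
          funext m
          have hcf := congrFun h8 m
          simp only [Pi.smul_apply, smul_eq_mul] at hcf
          omega
        have hF2 : tmap s s' (Pi.single (2 : Fin 16) (1 : ℤ) : Pic) = Pi.single (2 : Fin 16) 1 := by
          have hJ := congrArg (tmap s s') lemJ2
          simp only [map_add, map_smul, hk0, hk1, hk2, hk3, hk4, hk5, hk6, hk7, hk8, hk9, hk10, hk11, hk12, hα] at hJ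
          have h8 := hJ.trans lemJ2.symm
          funext m
          have hcf := congrFun h8 m
          simp only [Pi.smul_apply, smul_eq_mul] at hcf
          omega
        have hF3 : tmap s s' (Pi.single (3 : Fin 16) (1 : ℤ) : Pic) = Pi.single (3 : Fin 16) 1 := by
          have hJ := congrArg (tmap s s') lemJ3
          simp only [map_add, map_smul, hk0, hk1, hk2, hk3, hk4, hk5, hk6, hk7, hk8, hk9, hk10, hk11, hk12, hα] at hJ
          have h8 := hJ.trans lemJ3.symm
          funext m
          have hcf := congrFun h8 m
          simp only [Pi.smul_apply, smul_eq_mul] at hcf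
          omega
        have hF4 : tmap s s' (Pi.single (4 : Fin 16) (1 : ℤ) : Pic) = Pi.single (4 : Fin 16) 1 := by
          have hJ := congrArg (tmap s s') lemJ4
          simp only [map_add, map_smul, hk0, hk1, hk2, hk3, hk4, hk5, hk6, hk7, hk8, hk9, hk10, hk11, hk12, hα] at hJ
          have h8 := hJ.trans lemJ4.symm
          funext m
          have hcf := congrFun h8 m
          simp only [Pi.smul_apply, smul_eq_mul] at hcf
          omega
        have hF5 : tmap s s' (Pi.single (5 : Fin 16) (1 : ℤ) : Pic) = Pi.single (5 : Fin 16) 1 := by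
          have hJ := congrArg (tmap s s') lemJ5
          simp only [map_add, map_smul, hk0, hk1, hk2, hk3, hk4, hk5, hk6, hk7, hk8, hk9, hk10, hk11, hk12, hα] at hJ
          have h8 := hJ.trans lemJ5.symm
          funext m
          have hcf := congrFun h8 m
          simp only [Pi.smul_apply, smul_eq_mul] at hcf
          omega
        have hF6 : tmap s s' (Pi.single (6 : Fin 16) (1 : ℤ) : Pic) = Pi.single (6 : Fin 16) 1 := by
          have hJ := congrArg (tmap s s') lemJ6
          simp only [map_add, map_smul, hk0, hk1, hk2, hk3, hk4, hk5, hk6, hk7, hk8, hk9, hk10, hk11, hk12, hα] at hJ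
          have h8 := hJ.trans lemJ6.symm
          funext m
          have hcf := congrFun h8 m
          simp only [Pi.smul_apply, smul_eq_mul] at hcf
          omega
        have hF7 : tmap s s' (Pi.single (7 : Fin 16) (1 : ℤ) : Pic) = Pi.single (7 : Fin 16) 1 := by
          have hJ := congrArg (tmap s s') lemJ7
          simp only [map_add, map_smul, hk0, hk1, hk2, hk3, hk4, hk5, hk6, hk7, hk8, hk9, hk10, hk11, hk12, hα] at hJ
          have h8 := hJ.trans lemJ7.symm
          funext m
          have hcf := congrFun h8 m
          simp only [Pi.smul_apply, smul_eq_mul] at hcf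
          omega
        have hF8 : tmap s s' (Pi.single (8 : Fin 16) (1 : ℤ) : Pic) = Pi.single (8 : Fin 16) 1 := by
          have hJ := congrArg (tmap s s') lemJ8
          simp only [map_add, map_smul, hk0, hk1, hk2, hk3, hk4, hk5, hk6, hk7, hk8, hk9, hk10, hk11, hk12, hα] at hJ
          have h8 := hJ.trans lemJ8.symm
          funext m
          have hcf := congrFun h8 m
          simp only [Pi.smul_apply, smul_eq_mul] at hcf
          omega
        have hF9 : tmap s s' (Pi.single (9 : Fin 16) (1 : ℤ) : Pic) = Pi.single (9 : Fin 16) 1 := by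
          have hJ := congrArg (tmap s s') lemJ9
          simp only [map_add, map_smul, hk0, hk1, hk2, hk3, hk4, hk5, hk6, hk7, hk8, hk9, hk10, hk11, hk12, hα] at hJ
          have h8 := hJ.trans lemJ9.symm
          funext m
          have hcf := congrFun h8 m
          simp only [Pi.smul_apply, smul_eq_mul] at hcf
          omega
        have hF10 : tmap s s' (Pi.single (10 : Fin 16) (1 : ℤ) : Pic) = Pi.single (10 : Fin 16) 1 := by
          have hJ := congrArg (tmap s s') lemJ10
          simp only [map_add, map_smul, hk0, hk1, hk2, hk3, hk4, hk5, hk6, hk7, hk8, hk9, hk10, hk11, hk12, hα] at hJ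
          have h8 := hJ.trans lemJ10.symm
          funext m
          have hcf := congrFun h8 m
          simp only [Pi.smul_apply, smul_eq_mul] at hcf
          omega
        have hF11 : tmap s s' (Pi.single (11 : Fin 16) (1 : ℤ) : Pic) = Pi.single (11 : Fin 16) 1 := by
          have hJ := congrArg (tmap s s') lemJ11
          simp only [map_add, map_smul, hk0, hk1, hk2, hk3, hk4, hk5, hk6, hk7, hk8, hk9, hk10, hk11, hk12, hα] at hJ
          have h8 := hJ.trans lemJ11.symm
          funext m
          have hcf := congrFun h8 m
          simp only [Pi.smul_apply, smul_eq_mul] at hcf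
          omega
        have hF12 : tmap s s' (Pi.single (12 : Fin 16) (1 : ℤ) : Pic) = Pi.single (12 : Fin 16) 1 := by
          have hJ := congrArg (tmap s s') lemJ12
          simp only [map_add, map_smul, hk0, hk1, hk2, hk3, hk4, hk5, hk6, hk7, hk8, hk9, hk10, hk11, hk12, hα] at hJ
          have h8 := hJ.trans lemJ12.symm
          funext m
          have hcf := congrFun h8 m
          simp only [Pi.smul_apply, smul_eq_mul] at hcf
          omega
        have hF13 : tmap s s' (Pi.single (13 : Fin 16) (1 : ℤ) : Pic) = Pi.single (13 : Fin 16) 1 := by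
          have hJ := congrArg (tmap s s') lemJ13
          simp only [map_add, map_smul, hk0, hk1, hk2, hk3, hk4, hk5, hk6, hk7, hk8, hk9, hk10, hk11, hk12, hα] at hJ
          have h8 := hJ.trans lemJ13.symm
          funext m
          have hcf := congrFun h8 m
          simp only [Pi.smul_apply, smul_eq_mul] at hcf
          omega
        have hF14 : tmap s s' (Pi.single (14 : Fin 16) (1 : ℤ) : Pic) = Pi.single (14 : Fin 16) 1 := by
          have hJ := congrArg (tmap s s') lemJ14
          simp only [map_add, map_smul, hk0, hk1, hk2, hk3, hk4, hk5, hk6, hk7, hk8, hk9, hk10, hk11, hk12, hα] at hJ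
          have h8 := hJ.trans lemJ14.symm
          funext m
          have hcf := congrFun h8 m
          simp only [Pi.smul_apply, smul_eq_mul] at hcf
          omega
        have hF15 : tmap s s' (Pi.single (15 : Fin 16) (1 : ℤ) : Pic) = Pi.single (15 : Fin 16) 1 := by
          have hJ := congrArg (tmap s s') lemJ15
          simp only [map_add, map_smul, hk0, hk1, hk2, hk3, hk4, hk5, hk6, hk7, hk8, hk9, hk10, hk11, hk12, hα] at hJ
          have h8 := hJ.trans lemJ15.symm
          funext m
          have hcf := congrFun h8 m
          simp only [Pi.smul_apply, smul_eq_mul] at hcf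
          omega
        have hsingle : ∀ i : Fin 16, tmap s s' (Pi.single i (1 : ℤ) : Pic) = Pi.single i 1 := by
          intro i
          fin_cases i
          exacts [hF0, hF1, hF2, hF3, hF4, hF5, hF6, hF7, hF8, hF9, hF10, hF11, hF12, hF13, hF14, hF15]
        have hv : ∀ v : Pic, v = ∑ i : Fin 16, v i • (Pi.single i (1 : ℤ) : Pic) := by
          intro v
          funext m
          rw [Finset.sum_apply]
          simp [Pi.single_apply]
        refine LinearEquiv.ext fun v => ?_
        conv_lhs => rw [hv v]
        conv_rhs => rw [hv v]
        rw [map_sum, map_sum]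
        refine Finset.sum_congr rfl fun i _ => ?_
        rw [map_smul, map_smul]
        congr 1
        have h1 : s'.symm (s (Pi.single i (1 : ℤ) : Pic)) = Pi.single i 1 := hsingle i
        calc s (Pi.single i (1 : ℤ) : Pic) = s' (s'.symm (s (Pi.single i 1))) := (s'.apply_symm_apply _).symm
          _ = s' (Pi.single i 1) := by rw [h1]
      · exfalso
        have hJ := congrArg (tmap s s') lemJ12
        simp only [map_add, map_smul, hk0, hk1, hk2, hk3, hk4, hk5, hk6, hk7, hk8, hk9, hk10, hk11, hk12, hα] at hJ
        have hval := congrFun hJ (12 : Fin 16)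
        rw [lemE0] at hval
        simp only [Pi.smul_apply, smul_eq_mul] at hval
        omega
    · rcases hc3 with ⟨rfl, rfl⟩ | ⟨rfl, rfl⟩
      · exfalso
        have hJ := congrArg (tmap s s') lemJ6
        simp only [map_add, map_smul, hk0, hk1, hk2, hk3, hk4, hk5, hk6, hk7, hk8, hk9, hk10, hk11, hk12, hα] at hJ
        have hval := congrFun hJ (6 : Fin 16)
        rw [lemE1] at hval
        simp only [Pi.smul_apply, smul_eq_mul] at hval
        omega
      · exfalso
        have hJ := congrArg (tmap s s') lemJ6
        simp only [map_add, map_smul, hk0, hk1, hk2, hk3, hk4, hk5, hk6, hk7, hk8, hk9, hk10, hk11, hk12, hα] at hJ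
        have hval := congrFun hJ (6 : Fin 16)
        rw [lemE2] at hval
        simp only [Pi.smul_apply, smul_eq_mul] at hval
        omega
  · rcases hc2 with ⟨rfl, rfl⟩ | ⟨rfl, rfl⟩
    · rcases hc3 with ⟨rfl, rfl⟩ | ⟨rfl, rfl⟩
      · exfalso
        have hJ := congrArg (tmap s s') lemJ2
        simp only [map_add, map_smul, hk0, hk1, hk2, hk3, hk4, hk5, hk6, hk7, hk8, hk9, hk10, hk11, hk12, hα] at hJ
        have hval := congrFun hJ (2 : Fin 16)
        rw [lemE3] at hval
        simp only [Pi.smul_apply, smul_eq_mul] at hval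
        omega
      · exfalso
        have hJ := congrArg (tmap s s') lemJ2
        simp only [map_add, map_smul, hk0, hk1, hk2, hk3, hk4, hk5, hk6, hk7, hk8, hk9, hk10, hk11, hk12, hα] at hJ
        have hval := congrFun hJ (2 : Fin 16)
        rw [lemE4] at hval
        simp only [Pi.smul_apply, smul_eq_mul] at hval
        omega
    · rcases hc3 with ⟨rfl, rfl⟩ | ⟨rfl, rfl⟩
      · exfalso
        have hJ := congrArg (tmap s s') lemJ2
        simp only [map_add, map_smul, hk0, hk1, hk2, hk3, hk4, hk5, hk6, hk7, hk8, hk9, hk10, hk11, hk12, hα] at hJ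
        have hval := congrFun hJ (2 : Fin 16)
        rw [lemE5] at hval
        simp only [Pi.smul_apply, smul_eq_mul] at hval
        omega
      · exfalso
        have hJ := congrArg (tmap s s') lemJ2
        simp only [map_add, map_smul, hk0, hk1, hk2, hk3, hk4, hk5, hk6, hk7, hk8, hk9, hk10, hk11, hk12, hα] at hJ
        have hval := congrFun hJ (2 : Fin 16)
        rw [lemE6] at hval
        simp only [Pi.smul_apply, smul_eq_mul] at hval
        omega
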